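/- arXiv:2305.18874 — 2 statements merged into one kernel-verified Lean document; each statement's English description precedes it below -/
import Mathlib

section
/- Let n ≥ 1, d ≥ 1, W_0,...,W_n ∈ ℝ^d, ω_0,...,ω_n > 0, and t ∈ [0,1]. Let ω^{(i)}_k and W^{(i)}_k be the quantities produced by the rational de Casteljau algorithm at t. Then all ω^{(i)}_k are strictly positive and the first derivative of the rational Bézier curve satisfies R_n'(t) = n · (ω^{(n-1)}_0 · ω^{(n-1)}_1 / (ω^{(n)}_0)^2) · (W^{(n-1)}_1 - W^{(n-1)}_0). -/
open Finset

/-- The `k`-th Bernstein polynomial of degree `n`. -/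
noncomputable def bern (n k : ℕ) (t : ℝ) : ℝ :=
  (n.choose k : ℝ) * t ^ k * (1 - t) ^ (n - k)

/-- The rational Bézier curve of degree `n` with control points `W` and weights `ω`. -/
noncomputable def RB (n d : ℕ) (ω : ℕ → ℝ) (W : ℕ → Fin d → ℝ) (t : ℝ) : Fin d → ℝ :=
  (∑ k ∈ range (n + 1), ω k * bern n k t)⁻¹ •
    ∑ k ∈ range (n + 1), (ω k * bern n k t) • W k

/-- The weights `ω^{(i)}_k` of the rational de Casteljau algorithm at `t`. -/
noncomputable def dcw (ω : ℕ → ℝ) (t : ℝ) : ℕ → ℕ → ℝ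
  | 0, k => ω k
  | i + 1, k => (1 - t) * dcw ω t i k + t * dcw ω t i (k + 1)

/-- The points `W^{(i)}_k` of the rational de Casteljau algorithm at `t`. -/
noncomputable def dcW (d : ℕ) (ω : ℕ → ℝ) (W : ℕ → Fin d → ℝ) (t : ℝ) :
    ℕ → ℕ → Fin d → ℝ
  | 0, k => W k
  | i + 1, k =>
      ((1 - t) * (dcw ω t i k / dcw ω t (i + 1) k)) • dcW d ω W t i k
        + (t * (dcw ω t i (k + 1) / dcw ω t (i + 1) k)) • dcW d ω W t i (k + 1)

/-- The derivative of the Bernstein polynomial, raw form. -/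
noncomputable def bernD (n k : ℕ) (t : ℝ) : ℝ :=
  (n.choose k : ℝ) * ((k : ℝ) * t ^ (k - 1) * (1 - t) ^ (n - k)
    + t ^ k * (((n - k : ℕ) : ℝ) * (1 - t) ^ (n - k - 1) * (-1)))

lemma bern_hasDerivAt (n k : ℕ) (t : ℝ) : HasDerivAt (bern n k) (bernD n k t) t := by
  have h1 : HasDerivAt (fun s : ℝ => s ^ k) ((k : ℝ) * t ^ (k - 1)) t := hasDerivAt_pow k t
  have h2 : HasDerivAt (fun s : ℝ => (1 - s) ^ (n - k))
      ((((n - k : ℕ) : ℝ) * (1 - t) ^ (n - k - 1)) * (-1)) t := by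
    have hin : HasDerivAt (fun s : ℝ => 1 - s) (-1) t := by
      simpa using (hasDerivAt_id t).const_sub 1
    exact (hasDerivAt_pow (n - k) (1 - t)).comp t hin
  have := ((h1.mul h2).const_mul ((n.choose k : ℝ)))
  have heq : (fun s : ℝ => (n.choose k : ℝ) * (s ^ k * (1 - s) ^ (n - k))) = bern n k := by
    funext s; simp [bern, mul_assoc]
  rw [← heq]
  exact this

lemma sum_bern_rec (i k : ℕ) (c : ℕ → ℝ) (t : ℝ) :
    ∑ j ∈ range (i + 2), c (k + j) * bern (i + 1) j t
      = (1 - t) * ∑ j ∈ range (i + 1), c (k + j) * bern i j t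
        + t * ∑ j ∈ range (i + 1), c (k + 1 + j) * bern i j t := by
  have hA : ∑ j ∈ range (i + 2), c (k + j) * ((i.choose j : ℝ) * t ^ j * (1 - t) ^ (i + 1 - j))
      = (1 - t) * ∑ j ∈ range (i + 1), c (k + j) * bern i j t := by
    rw [Finset.sum_range_succ, Finset.mul_sum]
    simp only [Nat.choose_succ_self, Nat.cast_zero, zero_mul, mul_zero, add_zero]
    refine Finset.sum_congr rfl fun j hj => ?_
    have hj' : j ≤ i := Nat.lt_succ_iff.mp (Finset.mem_range.mp hj)
    have h4 : i + 1 - j = (i - j) + 1 := by omega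
    rw [h4, bern, pow_succ]
    ring
  have hB : ∑ j ∈ range (i + 2),
        c (k + j) * ((((i + 1).choose j : ℝ) - (i.choose j : ℝ)) * t ^ j * (1 - t) ^ (i + 1 - j))
      = t * ∑ j ∈ range (i + 1), c (k + 1 + j) * bern i j t := by
    rw [Finset.sum_range_succ' (fun j => c (k + j) * ((((i + 1).choose j : ℝ) - (i.choose j : ℝ)) * t ^ j * (1 - t) ^ (i + 1 - j))) (i + 1)]
    simp only [Nat.choose_zero_right, Nat.cast_one, sub_self, zero_mul, mul_zero, add_zero]
    rw [Finset.mul_sum]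
    refine Finset.sum_congr rfl fun j hj => ?_
    have h2 : (((i + 1).choose (j + 1) : ℝ) - (i.choose (j + 1) : ℝ)) = (i.choose j : ℝ) := by
      rw [Nat.choose_succ_succ i j]; push_cast; ring
    have h3 : k + (j + 1) = k + 1 + j := by omega
    have h4 : i + 1 - (j + 1) = i - j := by omega
    rw [h2, h3, h4, bern]
    ring
  rw [← hA, ← hB, ← Finset.sum_add_distrib]
  refine Finset.sum_congr rfl fun j hj => ?_
  rw [bern]
  ring

lemma dcw_eq_sum (ω : ℕ → ℝ) (t : ℝ) (i k : ℕ) :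
    dcw ω t i k = ∑ j ∈ range (i + 1), ω (k + j) * bern i j t := by
  induction i generalizing k with
  | zero => simp [dcw, bern]
  | succ i ih =>
      rw [show i + 1 + 1 = i + 2 from rfl, sum_bern_rec i k ω t, dcw, ih k, ih (k + 1)]

lemma dcw_pos {n : ℕ} {ω : ℕ → ℝ} {t : ℝ} (hω : ∀ k ≤ n, 0 < ω k)
    (ht0 : 0 ≤ t) (ht1 : t ≤ 1) :
    ∀ i k, i + k ≤ n → 0 < dcw ω t i k := by
  intro i
  induction i with
  | zero => intro k hk; exact hω k (by omega)
  | succ i ih =>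
      intro k hk
      have h1 : 0 < dcw ω t i k := ih k (by omega)
      have h2 : 0 < dcw ω t i (k + 1) := ih (k + 1) (by omega)
      show 0 < (1 - t) * dcw ω t i k + t * dcw ω t i (k + 1)
      rcases ht0.eq_or_lt with h | h
      · subst h; simpa using h1
      · have : 0 < t * dcw ω t i (k + 1) := mul_pos h h2
        nlinarith

lemma dcw_mul_dcW {n : ℕ} {d : ℕ} (ω : ℕ → ℝ) (W : ℕ → Fin d → ℝ) {t : ℝ}
    (hω : ∀ k ≤ n, 0 < ω k) (ht0 : 0 ≤ t) (ht1 : t ≤ 1) (x : Fin d) :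
    ∀ i k, i + k ≤ n →
      dcw ω t i k * dcW d ω W t i k x
        = ∑ j ∈ range (i + 1), ω (k + j) * bern i j t * W (k + j) x := by
  intro i
  induction i with
  | zero => intro k hk; simp [dcw, dcW, bern]
  | succ i ih =>
      intro k hk
      have hne : dcw ω t (i + 1) k ≠ 0 := (dcw_pos hω ht0 ht1 (i + 1) k hk).ne'
      have h1 := ih k (by omega)
      have h2 := ih (k + 1) (by omega)
      have hrec : ∑ j ∈ range (i + 2), ω (k + j) * bern (i + 1) j t * W (k + j) x
          = (1 - t) * ∑ j ∈ range (i + 1), ω (k + j) * bern i j t * W (k + j) x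
            + t * ∑ j ∈ range (i + 1), ω (k + 1 + j) * bern i j t * W (k + 1 + j) x := by
        have h := sum_bern_rec i k (fun m => ω m * W m x) t
        calc ∑ j ∈ range (i + 2), ω (k + j) * bern (i + 1) j t * W (k + j) x
            = ∑ j ∈ range (i + 2), ω (k + j) * W (k + j) x * bern (i + 1) j t := by
              exact Finset.sum_congr rfl fun j _ => by ring
          _ = (1 - t) * ∑ j ∈ range (i + 1), ω (k + j) * W (k + j) x * bern i j t
              + t * ∑ j ∈ range (i + 1), ω (k + 1 + j) * W (k + 1 + j) x * bern i j t := h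
          _ = _ := by
              congr 1
              · congr 1
                exact Finset.sum_congr rfl fun j _ => by ring
              · congr 1
                exact Finset.sum_congr rfl fun j _ => by ring
      show dcw ω t (i + 1) k *
          (((1 - t) * (dcw ω t i k / dcw ω t (i + 1) k)) • dcW d ω W t i k
            + (t * (dcw ω t i (k + 1) / dcw ω t (i + 1) k)) • dcW d ω W t i (k + 1)) x
        = _
      simp only [Pi.add_apply, Pi.smul_apply, smul_eq_mul]
      rw [show i + 1 + 1 = i + 2 from rfl, hrec, ← h1, ← h2]
      field_simp

lemma sum_bernD (m : ℕ) (c : ℕ → ℝ) (t : ℝ) :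
    ∑ k ∈ range (m + 2), c k * bernD (m + 1) k t
      = ((m : ℝ) + 1) * (∑ j ∈ range (m + 1), c (j + 1) * bern m j t
          - ∑ j ∈ range (m + 1), c j * bern m j t) := by
  have hsplit : ∀ k, c k * bernD (m + 1) k t
      = c k * (((m + 1).choose k : ℝ) * (k : ℝ)) * (t ^ (k - 1) * (1 - t) ^ (m + 1 - k))
        - c k * (((m + 1).choose k : ℝ) * ((m + 1 - k : ℕ) : ℝ))
            * (t ^ k * (1 - t) ^ (m + 1 - k - 1)) := by
    intro k; rw [bernD]; ring
  rw [Finset.sum_congr rfl (fun k _ => hsplit k), Finset.sum_sub_distrib]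
  have hS1 : ∑ k ∈ range (m + 2),
      c k * (((m + 1).choose k : ℝ) * (k : ℝ)) * (t ^ (k - 1) * (1 - t) ^ (m + 1 - k))
      = ((m : ℝ) + 1) * ∑ j ∈ range (m + 1), c (j + 1) * bern m j t := by
    rw [Finset.sum_range_succ']
    simp only [Nat.cast_zero, mul_zero, zero_mul, add_zero]
    rw [Finset.mul_sum]
    refine Finset.sum_congr rfl fun k hk => ?_
    have hcn : ((m + 1).choose (k + 1) * (k + 1) : ℕ) = ((m + 1) * m.choose k : ℕ) :=
      (Nat.add_one_mul_choose_eq m k).symm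
    have hc : ((m + 1).choose (k + 1) : ℝ) * ((k : ℝ) + 1)
        = ((m : ℝ) + 1) * (m.choose k : ℝ) := by exact_mod_cast hcn
    have he : m + 1 - (k + 1) = m - k := by omega
    have he2 : (k + 1) - 1 = k := by omega
    rw [he, he2, bern]
    push_cast
    linear_combination (c (k + 1) * (t ^ k * (1 - t) ^ (m - k))) * hc
  have hS2 : ∑ k ∈ range (m + 2),
      c k * (((m + 1).choose k : ℝ) * ((m + 1 - k : ℕ) : ℝ)) * (t ^ k * (1 - t) ^ (m + 1 - k - 1))
      = ((m : ℝ) + 1) * ∑ j ∈ range (m + 1), c j * bern m j t := by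
    rw [Finset.sum_range_succ]
    simp only [Nat.sub_self, Nat.cast_zero, mul_zero, zero_mul, add_zero]
    rw [Finset.mul_sum]
    refine Finset.sum_congr rfl fun k hk => ?_
    have hk' : k ≤ m := Nat.lt_succ_iff.mp (Finset.mem_range.mp hk)
    have hc : ((m + 1).choose k : ℝ) * ((m + 1 - k : ℕ) : ℝ)
        = ((m : ℝ) + 1) * (m.choose k : ℝ) := by
      have h1 : (m + 1).choose (k + 1) * (k + 1) = (m + 1).choose k * (m + 1 - k) :=
        Nat.choose_succ_right_eq (m + 1) k
      have h2 : (m + 1) * m.choose k = (m + 1).choose (k + 1) * (k + 1) :=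
        Nat.add_one_mul_choose_eq m k
      have h3 : (m + 1).choose k * (m + 1 - k) = (m + 1) * m.choose k := by omega
      exact_mod_cast h3
    have he : m + 1 - k - 1 = m - k := by omega
    rw [he, bern]
    linear_combination (c k * (t ^ k * (1 - t) ^ (m - k))) * hc
  rw [hS1, hS2, mul_sub]

/-- the intermediate de Casteljau weights are strictly positive and Floater's
formula for the first derivative of a rational Bézier curve holds. -/
theorem floater_first_derivative (n d : ℕ) (hn : 1 ≤ n) (hd : 1 ≤ d)
    (W : ℕ → Fin d → ℝ) (ω : ℕ → ℝ) (hω : ∀ k ≤ n, 0 < ω k)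
    (t : ℝ) (ht0 : 0 ≤ t) (ht1 : t ≤ 1) :
    (∀ i ≤ n, ∀ k, k ≤ n - i → 0 < dcw ω t i k)
    ∧ deriv (RB n d ω W) t =
        ((n : ℝ) * (dcw ω t (n - 1) 0 * dcw ω t (n - 1) 1 / (dcw ω t n 0) ^ 2)) •
          (dcW d ω W t (n - 1) 1 - dcW d ω W t (n - 1) 0) := by
  obtain ⟨m, rfl⟩ : ∃ m, n = m + 1 := ⟨n - 1, by omega⟩
  refine ⟨fun i hi k hk => dcw_pos hω ht0 ht1 i k (by omega), ?_⟩
  simp only [Nat.add_sub_cancel]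
  -- notation
  set w0 := dcw ω t m 0 with hw0
  set w1 := dcw ω t m 1 with hw1
  set wn := dcw ω t (m + 1) 0 with hwn
  set P0 := dcW d ω W t m 0 with hP0
  set P1 := dcW d ω W t m 1 with hP1
  have hw0pos : 0 < w0 := dcw_pos hω ht0 ht1 m 0 (by omega)
  have hw1pos : 0 < w1 := dcw_pos hω ht0 ht1 m 1 (by omega)
  have hwnpos : 0 < wn := dcw_pos hω ht0 ht1 (m + 1) 0 (by omega)
  have hwn_eq : wn = (1 - t) * w0 + t * w1 := rfl
  -- the scalar function and its derivative
  have hw : HasDerivAt (fun s => ∑ k ∈ range (m + 1 + 1), ω k * bern (m + 1) k s)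
      (((m : ℝ) + 1) * (w1 - w0)) t := by
    have h := HasDerivAt.fun_sum (u := range (m + 1 + 1))
      (A := fun k s => ω k * bern (m + 1) k s)
      (A' := fun k => ω k * bernD (m + 1) k t)
      (fun k _ => (bern_hasDerivAt (m + 1) k t).const_mul (ω k))
    have hval : ∑ k ∈ range (m + 1 + 1), ω k * bernD (m + 1) k t
        = ((m : ℝ) + 1) * (w1 - w0) := by
      rw [show m + 1 + 1 = m + 2 from rfl, sum_bernD m ω t]
      congr 1
      rw [hw1, hw0, dcw_eq_sum, dcw_eq_sum]
      congr 1
      · exact Finset.sum_congr rfl fun j _ => by rw [show 1 + j = j + 1 by omega]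
      · exact Finset.sum_congr rfl fun j _ => by rw [show 0 + j = j by omega]
    rwa [hval] at h
  -- the vector function and its derivative
  have hA : HasDerivAt (fun s => ∑ k ∈ range (m + 1 + 1), (ω k * bern (m + 1) k s) • W k)
      ((((m : ℝ) + 1) • (w1 • P1 - w0 • P0)) : Fin d → ℝ) t := by
    have h := HasDerivAt.fun_sum (u := range (m + 1 + 1))
      (A := fun k s => (ω k * bern (m + 1) k s) • W k)
      (A' := fun k => (ω k * bernD (m + 1) k t) • W k)
      (fun k _ => ((bern_hasDerivAt (m + 1) k t).const_mul (ω k)).smul_const (W k))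
    have hval : (∑ k ∈ range (m + 1 + 1), (ω k * bernD (m + 1) k t) • W k)
        = (((m : ℝ) + 1) • (w1 • P1 - w0 • P0) : Fin d → ℝ) := by
      funext x
      simp only [Finset.sum_apply, Pi.smul_apply, Pi.sub_apply, smul_eq_mul]
      have e1 : ∑ k ∈ range (m + 1 + 1), (ω k * bernD (m + 1) k t) * W k x
          = ∑ k ∈ range (m + 2), (fun k => ω k * W k x) k * bernD (m + 1) k t :=
        Finset.sum_congr rfl fun k _ => by ring
      rw [e1, sum_bernD m (fun k => ω k * W k x) t]
      have e2 : w1 * P1 x = ∑ j ∈ range (m + 1), (fun k => ω k * W k x) (j + 1) * bern m j t := by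
        rw [hw1, hP1, dcw_mul_dcW ω W hω ht0 ht1 x m 1 (by omega)]
        exact Finset.sum_congr rfl fun j _ => by rw [show 1 + j = j + 1 by omega]; ring
      have e3 : w0 * P0 x = ∑ j ∈ range (m + 1), (fun k => ω k * W k x) j * bern m j t := by
        rw [hw0, hP0, dcw_mul_dcW ω W hω ht0 ht1 x m 0 (by omega)]
        exact Finset.sum_congr rfl fun j _ => by rw [show 0 + j = j by omega]; ring
      rw [← e2, ← e3]
    rwa [hval] at h
  -- value of the vector function at t
  have hAt : (∑ k ∈ range (m + 1 + 1), (ω k * bern (m + 1) k t) • W k)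
      = (((1 - t) * w0) • P0 + (t * w1) • P1 : Fin d → ℝ) := by
    funext x
    simp only [Finset.sum_apply, Pi.smul_apply, Pi.add_apply, smul_eq_mul]
    have h1 : wn * dcW d ω W t (m + 1) 0 x
        = ∑ j ∈ range (m + 2), ω (0 + j) * bern (m + 1) j t * W (0 + j) x :=
      dcw_mul_dcW ω W hω ht0 ht1 x (m + 1) 0 (by omega)
    have h2 : wn * dcW d ω W t (m + 1) 0 x
        = (1 - t) * w0 * P0 x + t * w1 * P1 x := by
      show wn * (((1 - t) * (dcw ω t m 0 / dcw ω t (m + 1) 0)) • dcW d ω W t m 0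
        + (t * (dcw ω t m 1 / dcw ω t (m + 1) 0)) • dcW d ω W t m 1) x
        = _
      simp only [Pi.add_apply, Pi.smul_apply, smul_eq_mul, ← hw0, ← hw1, ← hwn, ← hP0, ← hP1]
      field_simp
    have h3 : ∑ k ∈ range (m + 1 + 1), ω k * bern (m + 1) k t * W k x
        = ∑ j ∈ range (m + 2), ω (0 + j) * bern (m + 1) j t * W (0 + j) x :=
      Finset.sum_congr rfl fun j _ => by rw [show 0 + j = j by omega]
    rw [h3, ← h1, h2]
  -- value of the scalar function at t
  have hwt : (∑ k ∈ range (m + 1 + 1), ω k * bern (m + 1) k t) = wn := by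
    rw [hwn, dcw_eq_sum]
    exact (Finset.sum_congr rfl fun j _ => by rw [show 0 + j = j by omega]).symm
  have hwne : (∑ k ∈ range (m + 1 + 1), ω k * bern (m + 1) k t) ≠ 0 := by
    rw [hwt]; exact hwnpos.ne'
  -- derivative of RB
  have hRB : HasDerivAt (RB (m + 1) d ω W)
      ((∑ k ∈ range (m + 1 + 1), ω k * bern (m + 1) k t)⁻¹ •
          (((m : ℝ) + 1) • (w1 • P1 - w0 • P0))
        + (-(((m : ℝ) + 1) * (w1 - w0)) / (∑ k ∈ range (m + 1 + 1), ω k * bern (m + 1) k t) ^ 2) •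
          (∑ k ∈ range (m + 1 + 1), (ω k * bern (m + 1) k t) • W k)) t := by
    exact (hw.inv hwne).smul hA
  rw [hRB.deriv]
  rw [hwt, hAt]
  funext x
  simp only [Pi.add_apply, Pi.smul_apply, Pi.sub_apply, smul_eq_mul]
  rw [hwn_eq]
  have hne : (1 - t) * w0 + t * w1 ≠ 0 := by rw [← hwn_eq]; exact hwnpos.ne'
  field_simp
  push_cast
  ring
end

section
/- Let n ≥ 1, ω_0,...,ω_n > 0, and t ∈ (0,1). Then for every i with 1 ≤ i ≤ n, h^n_i(t) / (t · h^n_{i-1}(t)) = ω_i·(n-i+1) / (ω_{i-1}·i·(1-t) + ω_i·t·(n-i+1)·h^n_{i-1}(t)); in particular, the ratio h^n_i(t)/(t·h^n_{i-1}(t)) does not depend on h^n_i(t). -/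
open Finset

/-- The quantity `h^n_i(t)`, with `h^n_0(t) := 1`. -/
noncomputable def hfun (n : ℕ) (ω : ℕ → ℝ) (i : ℕ) (t : ℝ) : ℝ :=
  if i = 0 then 1
  else ω i * bern n i t / ∑ k ∈ range (i + 1), ω k * bern n k t

lemma bern_pos {n k : ℕ} (hk : k ≤ n) {t : ℝ} (ht0 : 0 < t) (ht1 : t < 1) :
    0 < bern n k t := by
  unfold bern
  have h1 : 0 < (n.choose k : ℝ) := by exact_mod_cast Nat.choose_pos hk
  have h2 : (0:ℝ) < 1 - t := by linarith
  positivity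

lemma sum_pos' (n : ℕ) (ω : ℕ → ℝ) (hω : ∀ k ≤ n, 0 < ω k) {t : ℝ}
    (ht0 : 0 < t) (ht1 : t < 1) {i : ℕ} (hin : i ≤ n) :
    0 < ∑ k ∈ range (i + 1), ω k * bern n k t := by
  apply Finset.sum_pos
  · intro k hk
    have hk' : k ≤ n := le_trans (Nat.lt_succ_iff.mp (mem_range.mp hk)) hin
    exact mul_pos (hω k hk') (bern_pos hk' ht0 ht1)
  · exact ⟨0, mem_range.mpr (Nat.succ_pos i)⟩

lemma hfun_eq (n : ℕ) (ω : ℕ → ℝ) (hω : ∀ k ≤ n, 0 < ω k) {t : ℝ}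
    (ht0 : 0 < t) (ht1 : t < 1) {j : ℕ} (hjn : j ≤ n) :
    hfun n ω j t = ω j * bern n j t / ∑ k ∈ range (j + 1), ω k * bern n k t := by
  unfold hfun
  rcases Nat.eq_zero_or_pos j with rfl | hj
  · have h0 : ω 0 * bern n 0 t ≠ 0 :=
      ne_of_gt (mul_pos (hω 0 (Nat.zero_le n)) (bern_pos (Nat.zero_le n) ht0 ht1))
    simp [Finset.sum_range_one, div_self h0]
  · rw [if_neg (Nat.pos_iff_ne_zero.mp hj)]

lemma bern_key {n i : ℕ} (hi1 : 1 ≤ i) (hin : i ≤ n) {t : ℝ} :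
    (i : ℝ) * (1 - t) * bern n i t = ((n : ℝ) - i + 1) * t * bern n (i - 1) t := by
  obtain ⟨j, rfl⟩ := Nat.exists_eq_succ_of_ne_zero (by omega : i ≠ 0)
  simp only [Nat.succ_sub_one]
  have hjn : j + 1 ≤ n := hin
  have hch : ((n.choose (j + 1) : ℝ)) * ((j:ℝ) + 1) = (n.choose j : ℝ) * ((n : ℝ) - j) := by
    have h := Nat.choose_succ_right_eq n j
    have h2 : ((n.choose (j+1) : ℝ)) * (((j:ℕ)+1 : ℕ) : ℝ) = ((n.choose j : ℕ) : ℝ) * ((n - j : ℕ) : ℝ) := by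
      exact_mod_cast congrArg (Nat.cast (R:=ℝ)) h
    rw [Nat.cast_sub (by omega)] at h2
    push_cast at h2
    convert h2 using 2
  have hexp : n - j = (n - (j + 1)) + 1 := by omega
  unfold bern
  rw [hexp, pow_succ, pow_succ]
  push_cast
  linear_combination (t * t ^ j * (1 - t) * (1 - t) ^ (n - (j + 1))) * hch

/-- for `1 ≤ i ≤ n` and `t ∈ (0,1)`,
`h^n_i(t)/(t·h^n_{i-1}(t)) = ω_i(n-i+1) / (ω_{i-1}·i·(1-t) + ω_i·t·(n-i+1)·h^n_{i-1}(t))`;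
in particular the left-hand side does not depend on `h^n_i(t)`. -/
theorem hfun_ratio (n : ℕ) (hn : 1 ≤ n) (ω : ℕ → ℝ) (hω : ∀ k ≤ n, 0 < ω k)
    (t : ℝ) (ht0 : 0 < t) (ht1 : t < 1) (i : ℕ) (hi1 : 1 ≤ i) (hin : i ≤ n) :
    hfun n ω i t / (t * hfun n ω (i - 1) t) =
      ω i * ((n : ℝ) - i + 1) /
        (ω (i - 1) * i * (1 - t) + ω i * t * ((n : ℝ) - i + 1) * hfun n ω (i - 1) t) := by
  have hin' : i - 1 ≤ n := by omega
  rw [hfun_eq n ω hω ht0 ht1 hin, hfun_eq n ω hω ht0 ht1 hin']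
  have hidx : i - 1 + 1 = i := by omega
  set s := ∑ k ∈ range (i - 1 + 1), ω k * bern n k t with hs
  set b := bern n (i - 1) t with hb
  set c := bern n i t with hc
  have hSi : (∑ k ∈ range (i + 1), ω k * bern n k t) = s + ω i * c := by
    rw [← hidx, Finset.sum_range_succ, hidx, hs, hidx, hc]
  rw [hSi]
  have hbpos : 0 < b := bern_pos hin' ht0 ht1
  have hcpos : 0 < c := bern_pos hin ht0 ht1
  have hspos : 0 < s := sum_pos' n ω hω ht0 ht1 hin'
  have hwi : 0 < ω i := hω i hin
  have hwi1 : 0 < ω (i - 1) := hω (i - 1) hin'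
  have hkey : (i : ℝ) * (1 - t) * c = ((n : ℝ) - i + 1) * t * b := bern_key hi1 hin
  have hApos : (0 : ℝ) < (n : ℝ) - i + 1 := by
    have : (i : ℝ) ≤ n := by exact_mod_cast hin
    linarith
  have h1t : (0 : ℝ) < 1 - t := by linarith
  have hipos : (0 : ℝ) < (i : ℝ) := by exact_mod_cast hi1
  have hD : 0 < ω (i - 1) * i * (1 - t) + ω i * t * ((n : ℝ) - i + 1) * (ω (i-1) * b / s) := by
    have h2 : 0 < ω i * t * ((n : ℝ) - i + 1) * (ω (i-1) * b / s) := by positivity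
    have h1 : 0 < ω (i - 1) * (i : ℝ) * (1 - t) := by positivity
    linarith
  have hsc : 0 < s + ω i * c := by positivity
  rw [div_eq_div_iff (by positivity) (ne_of_gt hD)]
  field_simp
  linear_combination s * hkey
end
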